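/- arXiv:2109.02758 — 4 statements merged into one kernel-verified Lean document; each statement's English description precedes it below -/
import Mathlib

section
/- Let M be an abelian group regarded as a module over G = ℤ ⊕ ℤ with trivial G-action. Then H²(G, M) is isomorphic to M as an abelian group. -/
/-!
Write `e₁, e₂` for the standard generators of `ℤ²`. On 2-cocycles with trivial coefficients,
`f ↦ f (e₁, e₂) - f (e₂, e₁)` kills coboundaries because `ℤ²` is abelian, and it is onto because
the bilinear cocycle `((a, b), (c, d)) ↦ (a * d) • m` is sent to `m`. Conversely, if
`f (e₁, e₂) = f (e₂, e₁)`, the lifts `(0, e₁)` and `(0, e₂)` commute in the central extension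
`M ×_f ℤ²`, hence define a homomorphic section of it, and a homomorphic section `g ↦ (-x g, g)`
exhibits `f` as the coboundary of `x`. So the map induces `H²(ℤ², M) ≃ M`.
-/

universe u

open Multiplicative

section CentralExtension

variable {G M : Type*} [Group G] [AddCommGroup M] {f : G × G → M}

/-- `f` need not be normalized, so the unit is `(-f (1, 1), 1)` rather than `(0, 1)`. -/
abbrev centralExtensionGroup
    (hf : ∀ g h j : G, f (g * h, j) + f (g, h) = f (h, j) + f (g, h * j)) : Group (M × G) where
  mul p q := (p.1 + q.1 + f (p.2, q.2), p.2 * q.2)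
  one := (-f (1, 1), 1)
  inv p := (-p.1 - f (1, 1) - f (p.2⁻¹, p.2), p.2⁻¹)
  mul_assoc p q r := Prod.ext (by
      change p.1 + q.1 + f (p.2, q.2) + r.1 + f (p.2 * q.2, r.2)
        = p.1 + (q.1 + r.1 + f (q.2, r.2)) + f (p.2, q.2 * r.2)
      linear_combination (norm := abel) hf p.2 q.2 r.2) (mul_assoc _ _ _)
  one_mul p := Prod.ext (by
      change -f (1, 1) + p.1 + f (1, p.2) = p.1
      have h := hf 1 1 p.2
      rw [one_mul, one_mul] at h
      linear_combination (norm := abel) -h) (one_mul _)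
  mul_one p := Prod.ext (by
      change p.1 + -f (1, 1) + f (p.2, 1) = p.1
      have h := hf p.2 1 1
      rw [mul_one, mul_one] at h
      linear_combination (norm := abel) h) (mul_one _)
  inv_mul_cancel p := Prod.ext (by
      change -p.1 - f (1, 1) - f (p.2⁻¹, p.2) + p.1 + f (p.2⁻¹, p.2) = -f (1, 1)
      abel) (inv_mul_cancel _)

end CentralExtension

def Commute.intProdHom {E : Type*} [Group E] {a b : E} (hab : Commute a b) :
    Multiplicative (ℤ × ℤ) →* E where
  toFun g := a ^ (toAdd g).1 * b ^ (toAdd g).2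
  map_one' := by simp
  map_mul' g h := by
    simp only [toAdd_mul, Prod.fst_add, Prod.snd_add, zpow_add]
    rw [mul_assoc, mul_assoc, ← mul_assoc (b ^ _), ((hab.zpow_zpow _ _).symm).eq]
    simp only [mul_assoc]

theorem Multiplicative.zpow_mul_zpow_toAdd (g : Multiplicative (ℤ × ℤ)) :
    ofAdd ((1 : ℤ), (0 : ℤ)) ^ (toAdd g).1 * ofAdd ((0 : ℤ), (1 : ℤ)) ^ (toAdd g).2 = g := by
  apply toAdd.injective
  ext <;> simp

theorem exists_coboundary_of_symmetric_on_generators {M : Type*} [AddCommGroup M]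
    {f : Multiplicative (ℤ × ℤ) × Multiplicative (ℤ × ℤ) → M}
    (hf : ∀ g h j, f (g * h, j) + f (g, h) = f (h, j) + f (g, h * j))
    (hsymm : f (ofAdd (1, 0), ofAdd (0, 1)) = f (ofAdd (0, 1), ofAdd (1, 0))) :
    ∃ x : Multiplicative (ℤ × ℤ) → M, ∀ g h, x h - x (g * h) + x g = f (g, h) := by
  let _ := centralExtensionGroup hf
  let π : M × Multiplicative (ℤ × ℤ) →* Multiplicative (ℤ × ℤ) :=
    { toFun := Prod.snd, map_one' := rfl, map_mul' := fun _ _ => rfl }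
  have hcomm : Commute ((0 : M), ofAdd ((1 : ℤ), (0 : ℤ))) (0, ofAdd (0, 1)) :=
    Prod.ext (by change 0 + 0 + _ = 0 + 0 + _; rw [hsymm]) (mul_comm _ _)
  let s := hcomm.intProdHom
  have hs : ∀ g, (s g).2 = g := fun g => by
    change π (_ ^ (toAdd g).1 * _ ^ (toAdd g).2) = g
    rw [map_mul, map_zpow, map_zpow]
    exact Multiplicative.zpow_mul_zpow_toAdd g
  refine ⟨fun g => -(s g).1, fun g h => ?_⟩
  have hmul : (s (g * h)).1 = (s g).1 + (s h).1 + f (g, h) := by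
    rw [map_mul]
    change _ + _ + f ((s g).2, (s h).2) = _
    rw [hs, hs]
  simp only [hmul]
  abel

namespace groupCohomology

section IsTrivial

variable {k G : Type u} [CommRing k] [Group G] {A : Rep k G} [A.IsTrivial]

theorem mem_cocycles₂_iff_of_isTrivial (f : G × G → A) :
    f ∈ cocycles₂ A ↔ ∀ g h j : G, f (g * h, j) + f (g, h) = f (h, j) + f (g, h * j) := by
  simp only [mem_cocycles₂_iff, Representation.isTrivial_apply]

theorem mem_coboundaries₂_iff_of_isTrivial (f : G × G → A) :
    f ∈ coboundaries₂ A ↔ ∃ x : G → A, ∀ g h : G, x h - x (g * h) + x g = f (g, h) := by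
  simp only [coboundaries₂, LinearMap.mem_range, funext_iff, Prod.forall, d₁₂_hom_apply,
    Representation.isTrivial_apply]

theorem apply_swap_of_mem_coboundaries₂ {f : G × G → A} (hf : f ∈ coboundaries₂ A) {g h : G}
    (hgh : Commute g h) : f (g, h) = f (h, g) := by
  obtain ⟨x, hx⟩ := (mem_coboundaries₂_iff_of_isTrivial f).1 hf
  rw [← hx, ← hx, hgh.eq]
  abel

theorem uncurry_mem_cocycles₂_of_map_mul {β : G → G → A}
    (hl : ∀ g h j, β (g * h) j = β g j + β h j) (hr : ∀ g h j, β g (h * j) = β g h + β g j) :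
    Function.uncurry β ∈ cocycles₂ A := by
  refine (mem_cocycles₂_iff_of_isTrivial _).2 fun g h j => ?_
  simp only [Function.uncurry_apply_pair, hl, hr]
  abel

end IsTrivial

def cocycles₂.swapSub {k G : Type u} [CommRing k] [Group G] (A : Rep k G) (g h : G) :
    cocycles₂ A →ₗ[k] A :=
  (LinearMap.proj (R := k) (φ := fun _ : G × G => A) (g, h) - LinearMap.proj (h, g)) ∘ₗ
    (cocycles₂ A).subtype

section IntProd

variable {k : Type} [CommRing k] (A : Rep k (Multiplicative (ℤ × ℤ))) [A.IsTrivial]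

theorem cocycles₂.swapSub_ofAdd_eq_zero_iff (f : cocycles₂ A) :
    swapSub A (ofAdd (1, 0)) (ofAdd (0, 1)) f = 0 ↔ ⇑f ∈ coboundaries₂ A := by
  refine ⟨fun hf => ?_, fun hf => sub_eq_zero.2 <|
    apply_swap_of_mem_coboundaries₂ hf (Commute.all _ _)⟩
  exact (mem_coboundaries₂_iff_of_isTrivial _).2 <| exists_coboundary_of_symmetric_on_generators
    ((mem_cocycles₂_iff_of_isTrivial _).1 f.2) (sub_eq_zero.1 hf)

theorem cocycles₂.swapSub_ofAdd_surjective :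
    Function.Surjective (swapSub A (ofAdd (1, 0)) (ofAdd (0, 1))) := by
  intro m
  refine ⟨⟨_, uncurry_mem_cocycles₂_of_map_mul (β := fun g h => ((toAdd g).1 * (toAdd h).2) • m)
    (fun g h j => by simp [add_mul, add_smul]) (fun g h j => by simp [mul_add, add_smul])⟩, ?_⟩
  simp [swapSub]

noncomputable def H2IntProdEquivOfIsTrivial : H2 A ≃ₗ[k] A :=
  let φ := cocycles₂.swapSub A (ofAdd (1, 0)) (ofAdd (0, 1))
  have hπ : Function.Surjective (H2π A) := (ModuleCat.epi_iff_surjective _).1 inferInstance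
  have hker : LinearMap.ker (H2π A).hom = LinearMap.ker φ := by
    ext f
    rw [LinearMap.mem_ker, LinearMap.mem_ker, cocycles₂.swapSub_ofAdd_eq_zero_iff]
    exact H2π_eq_zero_iff f
  ((H2π A).hom.quotKerEquivOfSurjective hπ).symm ≪≫ₗ Submodule.quotEquivOfEq _ _ hker ≪≫ₗ
    φ.quotKerEquivOfSurjective (cocycles₂.swapSub_ofAdd_surjective A)

end IntProd

end groupCohomology

/-- For an abelian group `M` regarded as a module over `G = ℤ ⊕ ℤ` with
trivial `G`-action, `H²(G, M)` is isomorphic to `M` as an abelian group. -/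
theorem groupCohomology_two_trivial_of_free_rank_two
    (M : Type) [AddCommGroup M] [Module ℤ M] :
    Nonempty ((groupCohomology (Rep.trivial ℤ (Multiplicative (ℤ × ℤ)) M) 2) ≃+ M) :=
  ⟨(groupCohomology.H2IntProdEquivOfIsTrivial _).toAddEquiv⟩
end

section
/- Let A be a commutative ring and n ≥ 1. Then the quotient ring A[X_{ij}]/(det) is faithfully flat as an A-algebra. -/
/-!
Over every quotient `A ⧸ I` the generic determinant is a non-zero-divisor: the substitution
`X ↦ X + t·1` embeds `(A ⧸ I)[X_{ij}]` into a polynomial ring in `t`, where `det` becomes a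
characteristic polynomial, hence monic. Comparing `A[X] →(det) A[X] → A[X]/(det) → 0` with its
tensor product by `I` then shows that `I ⊗ A[X]/(det) → A[X]/(det)` is injective, which is
flatness. Evaluation at the zero matrix, a zero of `det` when `n ≥ 1`, is an `A`-algebra
retraction onto `A`, so no maximal ideal of `A` generates the unit ideal of the quotient.
-/

open TensorProduct LinearMap nonZeroDivisors

theorem TensorProduct.range_lift_lsmul_comp_subtype {A P : Type*} [CommRing A] [AddCommGroup P]
    [Module A P] (I : Ideal A) :
    range (lift ((lsmul A P).comp I.subtype)) = I • (⊤ : Submodule A P) := by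
  refine le_antisymm ?_ fun w hw => ?_
  · rintro _ ⟨y, rfl⟩
    induction y with
    | zero => simp
    | tmul a x => exact Submodule.smul_mem_smul a.2 Submodule.mem_top
    | add y z hy hz => rw [map_add]; exact add_mem hy hz
  · exact Submodule.smul_induction_on hw (fun a ha x _ => ⟨⟨a, ha⟩ ⊗ₜ x, rfl⟩)
      fun _ _ => add_mem

namespace Module.Flat

variable {A N P Q : Type*} [CommRing A] [AddCommGroup N] [Module A N] [AddCommGroup P]
  [Module A P] [AddCommGroup Q] [Module A Q]

theorem lift_lsmul_comp_subtype_injective [Module.Flat A P] (I : Ideal A) :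
    Function.Injective (lift ((lsmul A P).comp I.subtype)) := by
  rw [← lid_comp_rTensor]
  exact (TensorProduct.lid A P).injective.comp
    (rTensor_preserves_injective_linearMap _ Subtype.val_injective)

/-- The hypothesis says that `N ⧸ I N → P ⧸ I P` is injective for every ideal `I`. -/
theorem of_exact_of_comap_smul_top_le [Module.Flat A P] {φ : N →ₗ[A] P} {π : P →ₗ[A] Q}
    (hexact : Function.Exact φ π) (hπ : Function.Surjective π)
    (h : ∀ I : Ideal A, (I • ⊤ : Submodule A P).comap φ ≤ I • ⊤) :
    Module.Flat A Q := by
  refine iff_lift_lsmul_comp_subtype_injective.mpr fun I _ => ?_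
  let ιN := lift ((lsmul A N).comp I.subtype)
  let ιP := lift ((lsmul A P).comp I.subtype)
  let ιQ := lift ((lsmul A Q).comp I.subtype)
  have hιφ : ιP ∘ₗ φ.lTensor I = φ ∘ₗ ιN :=
    TensorProduct.ext' fun _ _ => (map_smul φ _ _).symm
  have hιπ : ιQ ∘ₗ π.lTensor I = π ∘ₗ ιP :=
    TensorProduct.ext' fun _ _ => (map_smul π _ _).symm
  rw [injective_iff_map_eq_zero]
  intro z hz
  obtain ⟨y, rfl⟩ := lTensor_surjective I hπ z
  obtain ⟨w, hw⟩ : ιP y ∈ range φ := by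
    rw [← hexact.linearMap_ker_eq, mem_ker, ← LinearMap.comp_apply, ← hιπ]
    exact hz
  obtain ⟨y', hy'⟩ : w ∈ range ιN := by
    rw [range_lift_lsmul_comp_subtype]
    refine h I ?_
    rw [Submodule.mem_comap, hw, ← range_lift_lsmul_comp_subtype]
    exact mem_range_self _ y
  have hy : φ.lTensor I y' = y := by
    apply lift_lsmul_comp_subtype_injective I
    change (ιP ∘ₗ φ.lTensor I) y' = ιP y
    rw [hιφ, LinearMap.comp_apply, hy', hw]
  rw [← hy]
  exact (_root_.lTensor_exact I hexact hπ).apply_apply_eq_zero y'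

end Module.Flat

theorem Module.FaithfullyFlat.of_flat_of_algHom {A B : Type*} [CommRing A] [CommRing B]
    [Algebra A B] [Module.Flat A B] (ψ : B →ₐ[A] A) : Module.FaithfullyFlat A B :=
  of_comap_surjective fun p => ⟨PrimeSpectrum.comap ψ p, by
    rw [← PrimeSpectrum.comap_comp_apply, ψ.comp_algebraMap, Algebra.algebraMap_self,
      PrimeSpectrum.comap_id]⟩

namespace MvPolynomial

variable {σ A : Type*} [CommRing A]

theorem mem_smul_top_iff_map_eq_zero (I : Ideal A) (p : MvPolynomial σ A) :
    p ∈ I • (⊤ : Submodule A (MvPolynomial σ A)) ↔ map (Ideal.Quotient.mk I) p = 0 := by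
  rw [Ideal.smul_top_eq_map, Submodule.restrictScalars_mem, ← RingHom.mem_ker, ker_map,
    Ideal.mk_ker, algebraMap_eq]

theorem flat_quotient_span_singleton (f : MvPolynomial σ A)
    (hf : ∀ I : Ideal A, map (Ideal.Quotient.mk I) f ∈ (MvPolynomial σ (A ⧸ I))⁰) :
    Module.Flat A (MvPolynomial σ A ⧸ Ideal.span {f}) := by
  refine Module.Flat.of_exact_of_comap_smul_top_le (φ := LinearMap.mulLeft A f)
    (π := (Ideal.Quotient.mkₐ A (Ideal.span {f})).toLinearMap) ?_ Ideal.Quotient.mk_surjective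
    fun I p hp => ?_
  · intro p
    rw [AlgHom.toLinearMap_apply, Ideal.Quotient.mkₐ_eq_mk, Ideal.Quotient.eq_zero_iff_mem,
      Ideal.mem_span_singleton']
    simp only [Set.mem_range, LinearMap.mulLeft_apply, mul_comm]
  · rw [Submodule.mem_comap, LinearMap.mulLeft_apply, mem_smul_top_iff_map_eq_zero, map_mul,
      mul_comm] at hp
    exact (mem_smul_top_iff_map_eq_zero I p).mpr ((hf I).2 _ hp)

end MvPolynomial

namespace Matrix

theorem det_mvPolynomialX_mem_nonZeroDivisors (ι R : Type*) [Fintype ι] [DecidableEq ι]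
    [CommRing R] : (mvPolynomialX ι ι R).det ∈ (MvPolynomial (ι × ι) R)⁰ := by
  let φ : MvPolynomial (ι × ι) R →ₐ[R] Polynomial (MvPolynomial (ι × ι) R) :=
    MvPolynomial.aeval fun p => charmatrix (-mvPolynomialX ι ι R) p.1 p.2
  have hφ : Function.LeftInverse (Polynomial.eval 0) φ := by
    have : ((Polynomial.aeval 0).restrictScalars R).comp φ = AlgHom.id R _ := by
      ext p
      by_cases h : p.1 = p.2 <;> simp [φ, charmatrix_apply, diagonal_apply, h]
    exact fun p => congr($this p)
  refine mem_nonZeroDivisors_of_injective hφ.injective ?_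
  rw [AlgHom.map_det, mvPolynomialX_mapMatrix_aeval]
  exact (charpoly_monic (-mvPolynomialX ι ι R)).mem_nonZeroDivisors

theorem map_det_mvPolynomialX (ι : Type*) {R S : Type*} [Fintype ι] [DecidableEq ι] [CommRing R]
    [CommRing S] (f : R →+* S) :
    MvPolynomial.map f (mvPolynomialX ι ι R).det = (mvPolynomialX ι ι S).det := by
  rw [RingHom.map_det]
  congr 1
  ext
  simp

end Matrix

/-- For a commutative ring `A` and `n ≥ 1`, the quotient
`A[X_{ij}]/(det)` of the polynomial ring in the `n²` variables `X_{ij}` by the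
principal ideal generated by the generic determinant is faithfully flat over `A`. -/
theorem faithfullyFlat_mvPolynomial_quotient_span_det
    (A : Type) [CommRing A] (n : ℕ) (hn : 1 ≤ n)
    (d : MvPolynomial (Fin n × Fin n) A)
    (hd : d = Matrix.det (Matrix.of fun i j : Fin n => MvPolynomial.X (i, j))) :
    Module.FaithfullyFlat A (MvPolynomial (Fin n × Fin n) A ⧸ Ideal.span {d}) := by
  change d = (Matrix.mvPolynomialX (Fin n) (Fin n) A).det at hd
  have : Module.Flat A (MvPolynomial (Fin n × Fin n) A ⧸ Ideal.span {d}) :=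
    MvPolynomial.flat_quotient_span_singleton d fun I => by
      rw [hd, Matrix.map_det_mvPolynomialX]
      exact Matrix.det_mvPolynomialX_mem_nonZeroDivisors (Fin n) (A ⧸ I)
  let ev₀ : MvPolynomial (Fin n × Fin n) A →ₐ[A] A := MvPolynomial.aeval 0
  have hd0 : ev₀ d = 0 := by
    rw [hd]
    exact (Matrix.eval_det_mvPolynomialX (Fin n) A 0).trans
      (Matrix.det_eq_zero_of_row_eq_zero ⟨0, hn⟩ fun _ => rfl)
  exact Module.FaithfullyFlat.of_flat_of_algHom <| Ideal.Quotient.liftₐ _ ev₀ fun a ha => by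
    obtain ⟨c, rfl⟩ := Ideal.mem_span_singleton'.mp ha
    rw [map_mul, hd0, mul_zero]
end

section
/- Let A be a nontrivial commutative ring and n ≥ 1, and let B = A[X_{ij}, 1/det] be the localization of A[X_{ij}] away from det (so det is a unit of B). If a, b ∈ A are units and k, m ∈ ℤ are integers such that a · det^k = b · det^m in B, then a = b and k = m. In other words, the map A^× × ℤ → B^× sending (a, k) ↦ a · det^k is injective. -/
/-!
Sending the generic matrix to `diag(T, 1, …, 1)` is an `A`-algebra map
`A[X_{ij}] → A[T, T⁻¹]` taking `det` to the unit `T`, so it extends to `A[X_{ij}, 1/det]`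
and carries `a · det^k` to the Laurent monomial `a T^k`, from which `a` and `k` can be read off.
-/

open LaurentPolynomial

namespace LaurentPolynomial

variable {R : Type*} [CommSemiring R]

theorem val_zpow_eq_T_of_val_eq_T_one {w : R[T;T⁻¹]ˣ} (hw : (w : R[T;T⁻¹]) = T 1) (k : ℤ) :
    ((w ^ k : R[T;T⁻¹]ˣ) : R[T;T⁻¹]) = T k := by
  have hw_inv : ((w⁻¹ : R[T;T⁻¹]ˣ) : R[T;T⁻¹]) = T (-1) :=
    Units.inv_eq_of_mul_eq_one_right (by rw [hw, ← T_add, add_neg_cancel, T_zero])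
  induction k using Int.induction_on with
  | zero => simp [T_zero]
  | succ i ih => rw [zpow_add_one, Units.val_mul, ih, hw, ← T_add]
  | pred i ih => rw [zpow_sub_one, Units.val_mul, ih, hw_inv, ← T_add, sub_eq_add_neg]

theorem C_mul_T_injective [Nontrivial R] :
    Function.Injective (fun p : Rˣ × ℤ => C (p.1 : R) * T p.2) := by
  rintro ⟨a, k⟩ ⟨b, m⟩ h
  simp only [← single_eq_C_mul_T] at h
  rcases AddMonoidAlgebra.single_inj.mp h with ⟨hk, hab⟩ | ⟨ha, -⟩
  · exact Prod.ext (Units.ext hab) hk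
  · exact absurd ha a.ne_zero

end LaurentPolynomial

theorem IsLocalization.Away.injective_units_map_mul_zpow {A R S : Type*} [CommRing A]
    [Nontrivial A] [CommRing R] [CommRing S] [Algebra A R] [Algebra R S] [Algebra A S]
    [IsScalarTower A R S] {d : R} [IsLocalization.Away d S]
    (φ : R →ₐ[A] A[T;T⁻¹]) (hφ : φ d = T 1) (u : Sˣ) (hu : (u : S) = algebraMap R S d) :
    Function.Injective (fun p : Aˣ × ℤ =>
      Units.map (algebraMap A S).toMonoidHom p.1 * u ^ p.2) := by
  let ψ : S →ₐ[A] A[T;T⁻¹] := liftAlgHom d (hφ ▸ isUnit_T 1)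
  have hψu : ψ u = T 1 := by
    rw [hu, liftAlgHom_apply, lift_eq]
    exact hφ
  refine Function.Injective.of_comp
    (f := fun z : Sˣ => ((Units.map (ψ : S →* A[T;T⁻¹]) z : A[T;T⁻¹]ˣ) : A[T;T⁻¹])) ?_
  convert C_mul_T_injective (R := A) using 2 with p
  rw [Function.comp_apply, map_mul, map_zpow, Units.val_mul,
    val_zpow_eq_T_of_val_eq_T_one (w := Units.map (ψ : S →* A[T;T⁻¹]) u) hψu]
  exact congrArg (· * T p.2) (ψ.commutes (p.1 : A))

theorem Matrix.aeval_det_mvPolynomialX {m R S : Type*} [Fintype m] [DecidableEq m]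
    [CommRing R] [CommRing S] [Algebra R S] (M : Matrix m m S) :
    MvPolynomial.aeval (fun p : m × m => M p.1 p.2) (mvPolynomialX m m R).det = M.det := by
  rw [AlgHom.map_det, mvPolynomialX_mapMatrix_aeval]

theorem LaurentPolynomial.det_diagonal_update_T_one {m R : Type*} [Fintype m] [DecidableEq m]
    [CommRing R] (i : m) :
    (Matrix.diagonal (Function.update 1 i (T 1 : R[T;T⁻¹]))).det = T 1 := by
  rw [Matrix.det_diagonal, Finset.prod_update_of_mem (Finset.mem_univ i)]
  simp

/-- Let `A` be a nontrivial commutative ring, `n ≥ 1`, and let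
`B = A[X_{ij}, 1/det]` be the localization of the polynomial ring away from the generic
determinant.  The map `Aˣ × ℤ → Bˣ`, `(a, k) ↦ a · det^k`, is injective: if
`a · det^k = b · det^m` with `a, b ∈ Aˣ` and `k, m ∈ ℤ`, then `a = b` and `k = m`. -/
theorem units_localization_away_det_injective
    (A : Type) [CommRing A] [Nontrivial A] (n : ℕ) (hn : 1 ≤ n)
    (d : MvPolynomial (Fin n × Fin n) A)
    (hd : d = Matrix.det (Matrix.of fun i j : Fin n => MvPolynomial.X (i, j)))
    (u : (Localization.Away d)ˣ)
    (hu : (u : Localization.Away d) = algebraMap (MvPolynomial (Fin n × Fin n) A) _ d) :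
    Function.Injective (fun p : Aˣ × ℤ =>
      Units.map (algebraMap A (Localization.Away d)).toMonoidHom p.1 * u ^ p.2) := by
  let D : Matrix (Fin n) (Fin n) A[T;T⁻¹] :=
    Matrix.diagonal (Function.update 1 ⟨0, hn⟩ (T 1))
  refine IsLocalization.Away.injective_units_map_mul_zpow
    (MvPolynomial.aeval fun p => D p.1 p.2) ?_ u hu
  rw [hd, ← Matrix.mvPolynomialX.eq_def, Matrix.aeval_det_mvPolynomialX,
    det_diagonal_update_T_one]
end

section
/- Let A be a commutative ring, n ≥ 1, and let a ∈ A satisfy a ≠ 0 and a² = 0. Then the image of det + a in B = A[X_{ij}, 1/det] is a unit (with (det + a)(det − a) = det²), but there exist no unit b ∈ A^× and integer k ∈ ℤ such that det + a = b · det^k in B. -/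
/-!
Specialise the generic matrix to the scalar matrix `T • 1` over the Laurent polynomial ring
`A[T;T⁻¹]`. Since `det` becomes the unit `T ^ n`, this extends to `A[X_{ij}, 1/det]`, and sends
`det + a` to `T ^ n + a` and `b · det ^ k` to the monomial `b T ^ (n k)`. A monomial cannot equal
`T ^ n + a`, which has non-zero coefficients in the two distinct degrees `n` and `0`.
-/

open LaurentPolynomial

theorem Matrix.eval₂Hom_det_mvPolynomialX {m R S : Type*} [Fintype m] [DecidableEq m]
    [CommRing R] [CommRing S] (f : R →+* S) (M : Matrix m m S) :
    MvPolynomial.eval₂Hom f (fun p : m × m => M p.1 p.2) (mvPolynomialX m m R).det = M.det := by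
  rw [RingHom.map_det]
  exact congrArg Matrix.det (mvPolynomialX_map_eval₂ f M)

namespace LaurentPolynomial

variable {R : Type*} [Semiring R]

theorem val_zpow_of_val_eq_T {v : R[T;T⁻¹]ˣ} {m : ℤ} (hv : (v : R[T;T⁻¹]) = T m) (k : ℤ) :
    ((v ^ k : R[T;T⁻¹]ˣ) : R[T;T⁻¹]) = T (m * k) := by
  have hinv : ((v⁻¹ : R[T;T⁻¹]ˣ) : R[T;T⁻¹]) = T (-m) :=
    Units.inv_eq_of_mul_eq_one_left (by rw [hv, ← T_add, neg_add_cancel, T_zero])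
  cases k with
  | ofNat k =>
    rw [Int.ofNat_eq_natCast, zpow_natCast, Units.val_pow_eq_pow_val, hv, T_pow, mul_comm]
  | negSucc k =>
    rw [zpow_negSucc, ← inv_pow, Units.val_pow_eq_pow_val, hinv, T_pow, Int.negSucc_eq]
    congr 1
    push_cast
    ring

theorem T_add_C_ne_C_mul_T {m : ℤ} (hm : m ≠ 0) {a : R} (ha : a ≠ 0) (b : R) (k : ℤ) :
    T m + C a ≠ C b * T k := by
  intro h
  have : Nontrivial R := nontrivial_of_ne a 0 ha
  have h0 := congrArg (fun p : R[T;T⁻¹] => p.coeff 0) h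
  have hm' := congrArg (fun p : R[T;T⁻¹] => p.coeff m) h
  simp [← single_eq_C_mul_T, Finsupp.single_apply, hm] at h0 hm'
  by_cases hk : k = 0
  · simp [hk, Ne.symm hm] at hm'
  · exact ha (by simpa [hk] using h0)

end LaurentPolynomial

theorem exists_ringHom_away_det_mvPolynomialX {A : Type*} [CommRing A] (n : ℕ)
    {d : MvPolynomial (Fin n × Fin n) A} (hd : d = (Matrix.mvPolynomialX (Fin n) (Fin n) A).det) :
    ∃ Ψ : Localization.Away d →+* A[T;T⁻¹],
      Ψ (algebraMap _ _ d) = T n ∧ ∀ c : A, Ψ (algebraMap A _ c) = C c := by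
  let ψ := MvPolynomial.eval₂Hom (C : A →+* A[T;T⁻¹])
    fun p : Fin n × Fin n => Matrix.diagonal (fun _ => T 1) p.1 p.2
  have hψd : ψ d = T n := by
    rw [hd, Matrix.eval₂Hom_det_mvPolynomialX, Matrix.det_diagonal, Finset.prod_const,
      Finset.card_univ, Fintype.card_fin, T_pow, mul_one]
  refine ⟨IsLocalization.Away.lift d (hψd ▸ isUnit_T (n : ℤ)), ?_, fun c => ?_⟩
  · rw [IsLocalization.Away.lift_eq, hψd]
  · rw [IsScalarTower.algebraMap_apply A (MvPolynomial (Fin n × Fin n) A),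
      IsLocalization.Away.lift_eq, MvPolynomial.algebraMap_eq, MvPolynomial.eval₂Hom_C]

/-- Let `A` be a commutative ring, `n ≥ 1`, and `a ∈ A` with `a ≠ 0`
and `a² = 0`.  Then `(det + a)(det − a) = det²` in `A[X_{ij}]`, the image of `det + a`
in `B = A[X_{ij}, 1/det]` is a unit, but `det + a` is not of the form `b · det^k` in `B`
for any unit `b ∈ Aˣ` and integer `k ∈ ℤ`. -/
theorem det_add_nilpotent_unit_not_standard_form
    (A : Type) [CommRing A] (n : ℕ) (hn : 1 ≤ n)
    (a : A) (ha : a ≠ 0) (ha2 : a ^ 2 = 0)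
    (d : MvPolynomial (Fin n × Fin n) A)
    (hd : d = Matrix.det (Matrix.of fun i j : Fin n => MvPolynomial.X (i, j)))
    (u : (Localization.Away d)ˣ)
    (hu : (u : Localization.Away d) = algebraMap (MvPolynomial (Fin n × Fin n) A) _ d) :
    (d + MvPolynomial.C a) * (d - MvPolynomial.C a) = d ^ 2 ∧
    IsUnit (algebraMap (MvPolynomial (Fin n × Fin n) A) (Localization.Away d)
      (d + MvPolynomial.C a)) ∧
    ¬ ∃ (b : Aˣ) (k : ℤ),
      algebraMap (MvPolynomial (Fin n × Fin n) A) (Localization.Away d)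
          (d + MvPolynomial.C a) =
        ((Units.map (algebraMap A (Localization.Away d)).toMonoidHom b * u ^ k :
          (Localization.Away d)ˣ) : Localization.Away d) := by
  have hCa : (MvPolynomial.C a : MvPolynomial (Fin n × Fin n) A) ^ 2 = 0 := by
    rw [← map_pow, ha2, map_zero]
  have hsq : (d + MvPolynomial.C a) * (d - MvPolynomial.C a) = d ^ 2 := by
    linear_combination -hCa
  refine ⟨hsq, isUnit_of_mul_isUnit_left (y := algebraMap _ _ (d - MvPolynomial.C a)) ?_, ?_⟩
  · rw [← map_mul, hsq, map_pow]
    exact (IsLocalization.Away.algebraMap_isUnit d).pow 2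
  rintro ⟨b, k, heq⟩
  obtain ⟨Ψ, hΨd, hΨC⟩ := exists_ringHom_away_det_mvPolynomialX n hd
  have hΨu : (Units.map Ψ.toMonoidHom u : A[T;T⁻¹]) = T n := by
    rw [Units.coe_map, RingHom.toMonoidHom_eq_coe, MonoidHom.coe_coe, hu, hΨd]
  have hΨuk : Ψ ↑(u ^ k) = T (n * k) := by
    rw [← val_zpow_of_val_eq_T hΨu k, ← map_zpow]
    rfl
  have hspec := congrArg Ψ heq
  rw [map_add, map_add, ← MvPolynomial.algebraMap_eq, ← IsScalarTower.algebraMap_apply,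
    RingHom.toMonoidHom_eq_coe, Units.val_mul, map_mul, hΨuk, Units.coe_map, MonoidHom.coe_coe,
    hΨd, hΨC, hΨC] at hspec
  exact T_add_C_ne_C_mul_T (by omega) ha b _ hspec
end
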